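/- arXiv:2507.13149 — 3 statements merged into one kernel-verified Lean document; each statement's English description precedes it below -/
import Mathlib

section
/- Let (Ω,𝒢,ℙ) and (Ω',𝒢',ℙ') be probability spaces, ℱ ⊂ 𝒢 and ℱ' ⊂ 𝒢' sub-σ-algebras, and η a Bochner-integrable 𝒴-valued random variable on the product space (Ω×Ω', 𝒢⊗𝒢', ℙ⊗ℙ'). Then ℙ⊗ℙ'-almost surely, E_{ℙ⊗ℙ'}(η | ℱ⊗ℱ') = E(E'(η | 𝒢⊗ℱ') | ℱ⊗𝒢') = E'(E(η | ℱ⊗𝒢') | 𝒢⊗ℱ'), i.e. the conditional expectation with respect to the product σ-algebra ℱ⊗ℱ' can be computed by conditioning in each coordinate successively, in either order. -/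
/-!
Write `f = E[η | ℱ ⊗ ℱ']` and `g = E[η | 𝒢 ⊗ ℱ']`. Since `f` is `ℱ ⊗ 𝒢'`-measurable, it is
`E[g | ℱ ⊗ 𝒢']` as soon as `f` and `g` have the same integral over every rectangle `A × B` with
`A ∈ ℱ`, `B ∈ 𝒢'` (rectangles form a generating π-system). By Fubini these integrals are
`∫_B φ dμ'` and `∫_B ψ dμ'`, where `φ ω' = ∫_A f (ω, ω') dμ` and `ψ` is defined likewise from `g`.
Both `φ` and `ψ` are `ℱ'`-measurable, because `f` and `g` are `𝒢 ⊗ ℱ'`-measurable, and over every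
`B' ∈ ℱ'` both integrate to `∫_{A × B'} η`; hence `φ = ψ` a.e. The other order is symmetric.
-/

open MeasureTheory

theorem MeasurableSpace.prod_mono {α β : Type*} {m₁ n₁ : MeasurableSpace α}
    {m₂ n₂ : MeasurableSpace β} (h₁ : m₁ ≤ n₁) (h₂ : m₂ ≤ n₂) : m₁.prod m₂ ≤ n₁.prod n₂ :=
  sup_le_sup (MeasurableSpace.comap_mono h₁) (MeasurableSpace.comap_mono h₂)

namespace MeasureTheory

variable {α E : Type*} [NormedAddCommGroup E] [NormedSpace ℝ E]

theorem setIntegral_eq_of_isPiSystem {m m₀ : MeasurableSpace α} (hm : m ≤ m₀) {μ : Measure α}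
    {S : Set (Set α)} (hS_gen : m = MeasurableSpace.generateFrom S) (hS_pi : IsPiSystem S)
    {f g : α → E} (hf : Integrable f μ) (hg : Integrable g μ)
    (h_univ : ∫ x, f x ∂μ = ∫ x, g x ∂μ) (hS : ∀ s ∈ S, ∫ x in s, f x ∂μ = ∫ x in s, g x ∂μ)
    ⦃s : Set α⦄ (hs : MeasurableSet[m] s) : ∫ x in s, f x ∂μ = ∫ x in s, g x ∂μ := by
  induction s, hs using MeasurableSpace.induction_on_inter hS_gen hS_pi with
  | empty => simp
  | basic t ht => exact hS t ht
  | compl t ht iht =>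
    rw [setIntegral_compl (hm t ht) hf, setIntegral_compl (hm t ht) hg, h_univ, iht]
  | iUnion u hdisj hu ihu =>
    rw [integral_iUnion (fun i => hm _ (hu i)) hdisj hf.integrableOn,
      integral_iUnion (fun i => hm _ (hu i)) hdisj hg.integrableOn]
    exact tsum_congr ihu

variable [CompleteSpace E]

theorem ae_eq_condExp_of_forall_setIntegral_eq_of_isPiSystem {m m₀ : MeasurableSpace α}
    (hm : m ≤ m₀) {μ : Measure α} [SigmaFinite (μ.trim hm)] {S : Set (Set α)}
    (hS_gen : m = MeasurableSpace.generateFrom S) (hS_pi : IsPiSystem S)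
    {f g : α → E} (hf : Integrable f μ) (hg : Integrable g μ) (hgm : StronglyMeasurable[m] g)
    (h_univ : ∫ x, g x ∂μ = ∫ x, f x ∂μ) (hS : ∀ s ∈ S, ∫ x in s, g x ∂μ = ∫ x in s, f x ∂μ) :
    g =ᵐ[μ] μ[f | m] :=
  ae_eq_condExp_of_forall_setIntegral_eq hm hf (fun _ _ _ => hg.integrableOn)
    (fun _ hs _ => setIntegral_eq_of_isPiSystem hm hS_gen hS_pi hg hf h_univ hS hs)
    hgm.aestronglyMeasurable

section Prod

variable {Ω Ω' : Type*} {ℱ mΩ : MeasurableSpace Ω} {ℱ' mΩ' : MeasurableSpace Ω'}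
  {μ : Measure Ω} {μ' : Measure Ω'}

theorem setIntegral_prod_eq_of_forall_measurableSet_fst (hℱ : ℱ ≤ mΩ)
    [SigmaFinite (μ.trim hℱ)] [SFinite μ'] {f g : Ω × Ω' → E}
    (hf : Integrable f (μ.prod μ')) (hg : Integrable g (μ.prod μ'))
    (hfm : StronglyMeasurable[ℱ.prod mΩ'] f) (hgm : StronglyMeasurable[ℱ.prod mΩ'] g)
    {B : Set Ω'} (h : ∀ A, MeasurableSet[ℱ] A →
      ∫ z in A ×ˢ B, f z ∂μ.prod μ' = ∫ z in A ×ˢ B, g z ∂μ.prod μ')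
    (A : Set Ω) : ∫ z in A ×ˢ B, f z ∂μ.prod μ' = ∫ z in A ×ˢ B, g z ∂μ.prod μ' := by
  have := SigmaFinite.of_trim (μ := μ) hℱ
  have hB : μ.prod (μ'.restrict B) ≤ μ.prod μ' := Measure.prod_mono le_rfl Measure.restrict_le_self
  have slice_eq : (fun ω => ∫ ω' in B, f (ω, ω') ∂μ') =ᵐ[μ]
      fun ω => ∫ ω' in B, g (ω, ω') ∂μ' := by
    refine ae_eq_of_forall_setIntegral_eq_of_sigmaFinite' hℱ
      (fun _ _ _ => (hf.mono_measure hB).integral_prod_left.integrableOn)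
      (fun _ _ _ => (hg.mono_measure hB).integral_prod_left.integrableOn) (fun A hA _ => ?_)
      (@StronglyMeasurable.integral_prod_right' _ _ _ ℱ _ _ _ _ _ f hfm).aestronglyMeasurable
      (@StronglyMeasurable.integral_prod_right' _ _ _ ℱ _ _ _ _ _ g hgm).aestronglyMeasurable
    rw [← setIntegral_prod f hf.integrableOn, ← setIntegral_prod g hg.integrableOn]
    exact h A hA
  rw [setIntegral_prod f hf.integrableOn, setIntegral_prod g hg.integrableOn]
  exact integral_congr_ae (ae_restrict_of_ae slice_eq)

theorem setIntegral_prod_eq_of_forall_measurableSet_snd (hℱ' : ℱ' ≤ mΩ')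
    [SigmaFinite (μ'.trim hℱ')] [SFinite μ] {f g : Ω × Ω' → E}
    (hf : Integrable f (μ.prod μ')) (hg : Integrable g (μ.prod μ'))
    (hfm : StronglyMeasurable[mΩ.prod ℱ'] f) (hgm : StronglyMeasurable[mΩ.prod ℱ'] g)
    {A : Set Ω} (h : ∀ B, MeasurableSet[ℱ'] B →
      ∫ z in A ×ˢ B, f z ∂μ.prod μ' = ∫ z in A ×ˢ B, g z ∂μ.prod μ')
    (B : Set Ω') : ∫ z in A ×ˢ B, f z ∂μ.prod μ' = ∫ z in A ×ˢ B, g z ∂μ.prod μ' := by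
  have := SigmaFinite.of_trim (μ := μ') hℱ'
  have hswap := @measurable_swap Ω' Ω ℱ' mΩ
  rw [← setIntegral_prod_swap A B f, ← setIntegral_prod_swap A B g]
  exact setIntegral_prod_eq_of_forall_measurableSet_fst hℱ' hf.swap hg.swap
    (hfm.comp_measurable hswap) (hgm.comp_measurable hswap)
    (fun B hB => (setIntegral_prod_swap A B f).trans
      ((h B hB).trans (setIntegral_prod_swap A B g).symm)) B

open MeasurableSpace in
theorem condExp_prod_ae_eq_condExp_fst_condExp_snd [IsFiniteMeasure μ] [IsFiniteMeasure μ']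
    (hℱ : ℱ ≤ mΩ) (hℱ' : ℱ' ≤ mΩ') {η : Ω × Ω' → E} (hη : Integrable η (μ.prod μ')) :
    (μ.prod μ')[η | ℱ.prod ℱ'] =ᵐ[μ.prod μ']
      (μ.prod μ')[(μ.prod μ')[η | mΩ.prod ℱ'] | ℱ.prod mΩ'] := by
  have hFF' : ℱ.prod ℱ' ≤ mΩ.prod mΩ' := prod_mono hℱ hℱ'
  have hGF' : mΩ.prod ℱ' ≤ mΩ.prod mΩ' := prod_mono le_rfl hℱ'
  have hFG' : ℱ.prod mΩ' ≤ mΩ.prod mΩ' := prod_mono hℱ le_rfl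
  refine ae_eq_condExp_of_forall_setIntegral_eq_of_isPiSystem hFG'
    (@generateFrom_prod Ω Ω' ℱ mΩ').symm (@isPiSystem_prod Ω Ω' ℱ mΩ') integrable_condExp
    integrable_condExp (stronglyMeasurable_condExp.mono (prod_mono le_rfl hℱ'))
    ((integral_condExp hFF').trans (integral_condExp hGF').symm) ?_
  rintro _ ⟨A, hA, B, -, rfl⟩
  refine setIntegral_prod_eq_of_forall_measurableSet_snd hℱ' integrable_condExp
    integrable_condExp (stronglyMeasurable_condExp.mono (prod_mono hℱ le_rfl))
    stronglyMeasurable_condExp (fun B hB => ?_) B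
  rw [setIntegral_condExp hFF' hη (hA.prod hB), setIntegral_condExp hGF' hη ((hℱ A hA).prod hB)]

open MeasurableSpace in
theorem condExp_prod_ae_eq_condExp_snd_condExp_fst [IsFiniteMeasure μ] [IsFiniteMeasure μ']
    (hℱ : ℱ ≤ mΩ) (hℱ' : ℱ' ≤ mΩ') {η : Ω × Ω' → E} (hη : Integrable η (μ.prod μ')) :
    (μ.prod μ')[η | ℱ.prod ℱ'] =ᵐ[μ.prod μ']
      (μ.prod μ')[(μ.prod μ')[η | ℱ.prod mΩ'] | mΩ.prod ℱ'] := by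
  have hFF' : ℱ.prod ℱ' ≤ mΩ.prod mΩ' := prod_mono hℱ hℱ'
  have hFG' : ℱ.prod mΩ' ≤ mΩ.prod mΩ' := prod_mono hℱ le_rfl
  have hGF' : mΩ.prod ℱ' ≤ mΩ.prod mΩ' := prod_mono le_rfl hℱ'
  refine ae_eq_condExp_of_forall_setIntegral_eq_of_isPiSystem hGF'
    (@generateFrom_prod Ω Ω' mΩ ℱ').symm (@isPiSystem_prod Ω Ω' mΩ ℱ') integrable_condExp
    integrable_condExp (stronglyMeasurable_condExp.mono (prod_mono hℱ le_rfl))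
    ((integral_condExp hFF').trans (integral_condExp hFG').symm) ?_
  rintro _ ⟨A, -, B, hB, rfl⟩
  refine setIntegral_prod_eq_of_forall_measurableSet_fst hℱ integrable_condExp
    integrable_condExp (stronglyMeasurable_condExp.mono (prod_mono le_rfl hℱ'))
    stronglyMeasurable_condExp (fun A hA => ?_) A
  rw [setIntegral_condExp hFF' hη (hA.prod hB), setIntegral_condExp hFG' hη (hA.prod (hℱ' B hB))]

end Prod

end MeasureTheory

/-- Conditional expectation with respect to a product σ-algebra `ℱ ⊗ ℱ'` can be computed
by conditioning successively in each coordinate, in either order. -/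
theorem stmt11 {Ω Ω' 𝒴 : Type*} {mΩ : MeasurableSpace Ω} {mΩ' : MeasurableSpace Ω'}
    [NormedAddCommGroup 𝒴] [NormedSpace ℝ 𝒴] [CompleteSpace 𝒴]
    (μ : Measure Ω) (μ' : Measure Ω') [IsProbabilityMeasure μ] [IsProbabilityMeasure μ']
    (ℱ : MeasurableSpace Ω) (ℱ' : MeasurableSpace Ω') (hℱ : ℱ ≤ mΩ) (hℱ' : ℱ' ≤ mΩ')
    (η : Ω × Ω' → 𝒴)
    (P : @Measure (Ω × Ω') (@Prod.instMeasurableSpace Ω Ω' mΩ mΩ')) (hP : P = @Measure.prod Ω Ω' mΩ mΩ' μ μ')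
    (hη : Integrable η P) :
    (P[η | ℱ.prod ℱ'] =ᵐ[P] P[(P[η | mΩ.prod ℱ']) | ℱ.prod mΩ']) ∧
    (P[η | ℱ.prod ℱ'] =ᵐ[P] P[(P[η | ℱ.prod mΩ']) | mΩ.prod ℱ']) := by
  subst hP
  exact ⟨condExp_prod_ae_eq_condExp_fst_condExp_snd hℱ hℱ' hη,
    condExp_prod_ae_eq_condExp_snd_condExp_fst hℱ hℱ' hη⟩
end

section
/- Let (Ω,𝒢,ℙ) be a probability space and h : ℝ → ℝ a bounded C¹ function with bounded Lipschitz derivative. Define g : L₂(Ω;ℝ) → ℝ by g(ξ) = E[h(ξ)]. Then g is Fréchet differentiable on L₂ with derivative Dg(ξ)[η] = E[h'(ξ)·η], and Dg is Lipschitz: ‖Dg(ξ) − Dg(ξ̄)‖_{L(L₂,ℝ)} ≤ L·‖ξ − ξ̄‖_{L₂}, where L is the Lipschitz constant of h'. -/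
/-!
Integrating the pointwise Taylor estimate `|h(x + y) - h(x) - h'(x) y| ≤ L y²` gives
`|g(ξ + η) - g(ξ) - E[h'(ξ) η]| ≤ L ‖η‖²`, so `g` is differentiable at `ξ` with derivative the
functional `⟪h' ∘ ξ, ·⟫`. This identifies `Dg` with the map `ξ ↦ h' ∘ ξ` into `L₂`, which is
`L`-Lipschitz because `h'` is.
-/

open MeasureTheory

lemma abs_sub_sub_mul_le_of_lipschitzWith_deriv {h h' : ℝ → ℝ} {L : NNReal}
    (hd : ∀ x, HasDerivAt h (h' x) x) (hL : LipschitzWith L h') (a b : ℝ) :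
    |h (a + b) - h a - h' a * b| ≤ L * b ^ 2 := by
  have hderiv : ∀ x ∈ Set.uIcc a (a + b),
      HasDerivWithinAt (fun x => h x - h' a * x) (h' x - h' a) (Set.uIcc a (a + b)) x :=
    fun x _ => ((hd x).sub ((hasDerivAt_id x).const_mul (h' a))).hasDerivWithinAt.congr_deriv
      (by ring)
  have hbound : ∀ x ∈ Set.uIcc a (a + b), ‖h' x - h' a‖ ≤ L * |b| := fun x hx => by
    calc ‖h' x - h' a‖ ≤ L * |x - a| := by simpa [dist_eq_norm] using hL.dist_le_mul x a
      _ ≤ L * |b| :=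
        mul_le_mul_of_nonneg_left (by simpa using Set.abs_sub_left_of_mem_uIcc hx) L.2
  have hmvt := Convex.norm_image_sub_le_of_norm_hasDerivWithin_le hderiv hbound (convex_uIcc _ _)
    Set.left_mem_uIcc Set.right_mem_uIcc
  calc |h (a + b) - h a - h' a * b| = ‖(h (a + b) - h' a * (a + b)) - (h a - h' a * a)‖ := by
        rw [Real.norm_eq_abs]; ring_nf
    _ ≤ L * |b| * ‖a + b - a‖ := hmvt
    _ = L * b ^ 2 := by simp [mul_assoc, ← sq]

section

variable {Ω : Type*} [MeasurableSpace Ω] {μ : Measure Ω}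

lemma memLp_comp_of_abs_le [IsFiniteMeasure μ] {f : ℝ → ℝ} {C : ℝ} (hf : Continuous f)
    (hb : ∀ x, |f x| ≤ C) {g : Ω → ℝ} (hg : AEStronglyMeasurable g μ) (p : ENNReal) :
    MemLp (fun ω => f (g ω)) p μ :=
  MemLp.of_bound (hf.comp_aestronglyMeasurable hg) C (.of_forall fun ω => hb (g ω))

lemma L2.inner_eq_integral_mul_of_ae_eq {φ : Lp ℝ 2 μ} {f : Ω → ℝ} (hφ : φ =ᵐ[μ] f)
    (η : Lp ℝ 2 μ) : inner ℝ φ η = ∫ ω, f ω * η ω ∂μ :=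
  (L2.inner_def φ η).trans <| integral_congr_ae <| by
    filter_upwards [hφ] with ω hω
    simp [hω, mul_comm]

lemma L2.integrable_mul_of_ae_eq {φ : Lp ℝ 2 μ} {f : Ω → ℝ} (hφ : φ =ᵐ[μ] f)
    (η : Lp ℝ 2 μ) : Integrable (fun ω => f ω * η ω) μ :=
  (L2.integrable_inner (𝕜 := ℝ) φ η).congr <| by
    filter_upwards [hφ] with ω hω
    simp [hω, mul_comm]

lemma L2.integral_mul_self (η : Lp ℝ 2 μ) : ∫ ω, η ω * η ω ∂μ = ‖η‖ ^ 2 := by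
  rw [← real_inner_self_eq_norm_sq, L2.inner_eq_integral_mul_of_ae_eq (.refl _ _)]

variable {h h' : ℝ → ℝ} {L : NNReal}

lemma abs_integral_comp_add_sub_sub_inner_le (hd : ∀ x, HasDerivAt h (h' x) x)
    (hL : LipschitzWith L h') (hint : ∀ ζ : Lp ℝ 2 μ, Integrable (fun ω => h (ζ ω)) μ)
    {ξ φ : Lp ℝ 2 μ} (hφ : φ =ᵐ[μ] fun ω => h' (ξ ω)) (η : Lp ℝ 2 μ) :
    |(∫ ω, h ((ξ + η) ω) ∂μ) - (∫ ω, h (ξ ω) ∂μ) - inner ℝ φ η| ≤ L * ‖η‖ ^ 2 := by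
  have hadd : (fun ω => h ((ξ + η) ω)) =ᵐ[μ] fun ω => h (ξ ω + η ω) := by
    filter_upwards [Lp.coeFn_add ξ η] with ω hω
    rw [hω, Pi.add_apply]
  have hint_add := (hint (ξ + η)).congr hadd
  have hsplit : (∫ ω, h ((ξ + η) ω) ∂μ) - (∫ ω, h (ξ ω) ∂μ) - inner ℝ φ η
      = ∫ ω, (h (ξ ω + η ω) - h (ξ ω) - h' (ξ ω) * η ω) ∂μ := by
    rw [integral_sub (f := fun ω => h (ξ ω + η ω) - h (ξ ω)) (hint_add.sub (hint ξ))
      (L2.integrable_mul_of_ae_eq hφ η), integral_sub hint_add (hint ξ),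
      L2.inner_eq_integral_mul_of_ae_eq hφ, integral_congr_ae hadd]
  rw [hsplit, ← L2.integral_mul_self, ← integral_const_mul]
  refine abs_integral_le_integral_abs.trans <| integral_mono_of_nonneg
    (.of_forall fun _ => abs_nonneg _) ((L2.integrable_mul_of_ae_eq (.refl _ _) η).const_mul _)
    (.of_forall fun ω => ?_)
  simpa [sq] using abs_sub_sub_mul_le_of_lipschitzWith_deriv hd hL (ξ ω) (η ω)

lemma hasFDerivAt_integral_comp_of_ae_eq (hd : ∀ x, HasDerivAt h (h' x) x)
    (hL : LipschitzWith L h') (hint : ∀ ζ : Lp ℝ 2 μ, Integrable (fun ω => h (ζ ω)) μ)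
    {ξ φ : Lp ℝ 2 μ} (hφ : φ =ᵐ[μ] fun ω => h' (ξ ω)) :
    HasFDerivAt (fun ζ : Lp ℝ 2 μ => ∫ ω, h (ζ ω) ∂μ) (innerSL ℝ φ) ξ := by
  rw [hasFDerivAt_iff_isLittleO_nhds_zero]
  refine Asymptotics.IsBigO.trans_isLittleO (g := fun η : Lp ℝ 2 μ => ‖η‖ ^ 2)
    (.of_bound L (.of_forall fun η => ?_)) (Asymptotics.isLittleO_norm_pow_id one_lt_two)
  simpa using abs_integral_comp_add_sub_sub_inner_le hd hL hint hφ η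

lemma L2.norm_sub_le_of_lipschitzWith_of_ae_eq (hL : LipschitzWith L h')
    {ξ ξ' φ φ' : Lp ℝ 2 μ} (hφ : φ =ᵐ[μ] fun ω => h' (ξ ω))
    (hφ' : φ' =ᵐ[μ] fun ω => h' (ξ' ω)) : ‖φ - φ'‖ ≤ L * ‖ξ - ξ'‖ := by
  apply Lp.norm_le_mul_norm_of_ae_le_mul
  filter_upwards [Lp.coeFn_sub φ φ', Lp.coeFn_sub ξ ξ', hφ, hφ'] with ω hsub hsub' hω hω'
  rw [hsub, hsub', Pi.sub_apply, Pi.sub_apply, hω, hω']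
  simpa [dist_eq_norm] using hL.dist_le_mul (ξ ω) (ξ' ω)

end

/-- For `h : ℝ → ℝ` bounded `C¹` with bounded Lipschitz derivative, the function
`g(ξ) = E[h(ξ)]` is Fréchet differentiable on `L₂` with `Dg(ξ)[η] = E[h'(ξ)η]`, and
`Dg` is Lipschitz with the Lipschitz constant `L` of `h'`. -/
theorem stmt12 {Ω : Type*} [MeasurableSpace Ω] (μ : Measure Ω) [IsProbabilityMeasure μ]
    (h h' : ℝ → ℝ) (C : ℝ) (L : NNReal)
    (hd : ∀ x, HasDerivAt h (h' x) x)
    (hb : ∀ x, |h x| ≤ C) (hb' : ∀ x, |h' x| ≤ C)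
    (hL : LipschitzWith L h') :
    ∀ ξ : Lp ℝ 2 μ,
      (∃ D : Lp ℝ 2 μ →L[ℝ] ℝ,
        HasFDerivAt (fun ζ : Lp ℝ 2 μ => ∫ ω, h (ζ ω) ∂μ) D ξ ∧
        ∀ η : Lp ℝ 2 μ, D η = ∫ ω, h' (ξ ω) * η ω ∂μ) ∧
      ∀ ξ' : Lp ℝ 2 μ,
        ‖fderiv ℝ (fun ζ : Lp ℝ 2 μ => ∫ ω, h (ζ ω) ∂μ) ξ -
          fderiv ℝ (fun ζ : Lp ℝ 2 μ => ∫ ω, h (ζ ω) ∂μ) ξ'‖ ≤ (L : ℝ) * ‖ξ - ξ'‖ := by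
  have hint (ζ : Lp ℝ 2 μ) : Integrable (fun ω => h (ζ ω)) μ :=
    memLp_one_iff_integrable.1 <| memLp_comp_of_abs_le
      (continuous_iff_continuousAt.2 fun x => (hd x).continuousAt) hb (Lp.aestronglyMeasurable ζ) 1
  have hmem (ζ : Lp ℝ 2 μ) : MemLp (fun ω => h' (ζ ω)) 2 μ :=
    memLp_comp_of_abs_le hL.continuous hb' (Lp.aestronglyMeasurable ζ) 2
  have hD (ζ : Lp ℝ 2 μ) := hasFDerivAt_integral_comp_of_ae_eq hd hL hint (hmem ζ).coeFn_toLp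
  intro ξ
  refine ⟨⟨_, hD ξ, L2.inner_eq_integral_mul_of_ae_eq (hmem ξ).coeFn_toLp⟩, fun ξ' => ?_⟩
  rw [(hD ξ).fderiv, (hD ξ').fderiv, ← map_sub, innerSL_apply_norm]
  exact L2.norm_sub_le_of_lipschitzWith_of_ae_eq hL (hmem ξ).coeFn_toLp (hmem ξ').coeFn_toLp
end

section
/- Let (Ω,𝒢,ℙ) be an atomless Polish probability space, W a finite-dimensional real vector space, q ∈ [0,∞), p ≥ max(q,1), and 𝒴 a Banach space. Suppose f : 𝒫_q(W) → 𝒴 is such that the lift g : L_q(Ω;W) → 𝒴, g(ξ) = f(Law(ξ)), is continuously Fréchet differentiable along L_p(Ω;W). Then for all (ξ,η) and (ξ̄,η̄) in L_q × L_p with Law(ξ,η) = Law(ξ̄,η̄), one has Dg(ξ)[η] = Dg(ξ̄)[η̄]. -/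
open MeasureTheory ENNReal

/-! If `Law(ξ, η) = Law(ξ', η')` then `ξ + tη` and `ξ' + tη'` have the same law for every `t`, so
the lift `g` takes the same values along the two lines `t ↦ ξ + tη` and `t ↦ ξ' + tη'`. The
derivatives of these two real functions at `t = 0` are `Dg(ξ)[η]` and `Dg(ξ')[η']`, hence equal. -/

theorem ProbabilityTheory.IdentDistrib.add_smul {Ω Ω' 𝕜 W : Type*} [MeasurableSpace Ω]
    [MeasurableSpace Ω'] [MeasurableSpace W] [Add W] [SMul 𝕜 W] [MeasurableAdd₂ W]
    [MeasurableConstSMul 𝕜 W] {μ : Measure Ω} {ν : Measure Ω'} {ξ η : Ω → W} {ξ' η' : Ω' → W}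
    (h : IdentDistrib (fun ω => (ξ ω, η ω)) (fun ω => (ξ' ω, η' ω)) μ ν) (t : 𝕜) :
    IdentDistrib (fun ω => ξ ω + t • η ω) (fun ω => ξ' ω + t • η' ω) μ ν :=
  h.comp (measurable_fst.add (measurable_snd.const_smul t))

theorem ProbabilityTheory.IdentDistrib.map_add_Lp_smul_eq {Ω Ω' 𝕜 W : Type*} [MeasurableSpace Ω]
    [MeasurableSpace Ω'] [NormedField 𝕜] [NormedAddCommGroup W] [NormedSpace 𝕜 W]
    [MeasurableSpace W] [MeasurableAdd₂ W] [MeasurableConstSMul 𝕜 W] {p : ℝ≥0∞}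
    {μ : Measure Ω} {ν : Measure Ω'} {ξ : Ω → W} {ξ' : Ω' → W} {η : Lp W p μ} {η' : Lp W p ν}
    (h : IdentDistrib (fun ω => (ξ ω, η ω)) (fun ω => (ξ' ω, η' ω)) μ ν) (t : 𝕜) :
    μ.map (fun ω => ξ ω + (t • η) ω) = ν.map (fun ω => ξ' ω + (t • η') ω) := by
  have hη : (fun ω => ξ ω + (t • η) ω) =ᵐ[μ] fun ω => ξ ω + t • η ω := by
    filter_upwards [Lp.coeFn_smul t η] with ω hω using by simp [hω]
  have hη' : (fun ω => ξ' ω + (t • η') ω) =ᵐ[ν] fun ω => ξ' ω + t • η' ω := by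
    filter_upwards [Lp.coeFn_smul t η'] with ω hω using by simp [hω]
  rw [Measure.map_congr hη, Measure.map_congr hη']
  exact (h.add_smul t).map_eq

theorem HasLineDerivAt.eq_of_eq_on_lines {𝕜 E F : Type*} [NontriviallyNormedField 𝕜]
    [NormedAddCommGroup F] [NormedSpace 𝕜 F] [AddCommGroup E] [Module 𝕜 E]
    {f f' : E → F} {a b : F} {x x' v v' : E} (hf : HasLineDerivAt 𝕜 f a x v)
    (hf' : HasLineDerivAt 𝕜 f' b x' v') (h : ∀ t : 𝕜, f (x + t • v) = f' (x' + t • v')) :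
    a = b :=
  HasDerivAt.unique (funext h ▸ hf) hf'

theorem stmt17_general {Ω W 𝒴 : Type*} [MeasurableSpace Ω]
    [NormedAddCommGroup W] [NormedSpace ℝ W] [FiniteDimensional ℝ W]
    [MeasurableSpace W] [BorelSpace W]
    [NormedAddCommGroup 𝒴] [NormedSpace ℝ 𝒴]
    (ℙ : Measure Ω)
    (p q : ℝ≥0∞) [Fact (1 ≤ p)]
    (f : Measure W → 𝒴) (g : (Ω → W) → 𝒴)
    (hg : ∀ ξ : Ω → W, g ξ = f (Measure.map ξ ℙ))
    (Dg : (Ω → W) → (Lp W p ℙ →L[ℝ] 𝒴))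
    (hdiff : ∀ ξ : Ω → W,
      HasFDerivAt (fun ζ : Lp W p ℙ => g (fun ω => ξ ω + ζ ω)) (Dg ξ) 0) :
    ∀ (ξ ξ' : Ω → W) (η η' : Lp W p ℙ),
      AEMeasurable ξ ℙ → AEMeasurable ξ' ℙ → MemLp ξ q ℙ → MemLp ξ' q ℙ →
      Measure.map (fun ω => (ξ ω, η ω)) ℙ = Measure.map (fun ω => (ξ' ω, η' ω)) ℙ →
      Dg ξ η = Dg ξ' η' := by
  intro ξ ξ' η η' hξ hξ' _ _ hlaw
  have hident :
      ProbabilityTheory.IdentDistrib (fun ω => (ξ ω, η ω)) (fun ω => (ξ' ω, η' ω)) ℙ ℙ :=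
    ⟨hξ.prodMk (Lp.aestronglyMeasurable η).aemeasurable,
      hξ'.prodMk (Lp.aestronglyMeasurable η').aemeasurable, hlaw⟩
  refine ((hdiff ξ).hasLineDerivAt η).eq_of_eq_on_lines ((hdiff ξ').hasLineDerivAt η') fun t => ?_
  rw [zero_add, zero_add, hg, hg, hident.map_add_Lp_smul_eq t]

/-- Law-invariance of the Fréchet derivative along `L_p` of a Lions lift
`g(ξ) = f(Law(ξ))`: if `Law(ξ,η) = Law(ξ',η')` then `Dg(ξ)[η] = Dg(ξ')[η']`. -/
theorem stmt17 {Ω W 𝒴 : Type*} [MeasurableSpace Ω] [TopologicalSpace Ω] [PolishSpace Ω]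
    [BorelSpace Ω]
    [NormedAddCommGroup W] [NormedSpace ℝ W] [FiniteDimensional ℝ W]
    [MeasurableSpace W] [BorelSpace W]
    [NormedAddCommGroup 𝒴] [NormedSpace ℝ 𝒴]
    (ℙ : Measure Ω) [IsProbabilityMeasure ℙ] [NullSingletonClass ℙ]
    (p q : ℝ≥0∞) [Fact (1 ≤ p)] (hq : q < ⊤) (hp1 : 1 ≤ p) (hqp : q ≤ p)
    (f : Measure W → 𝒴) (g : (Ω → W) → 𝒴)
    (hg : ∀ ξ : Ω → W, g ξ = f (Measure.map ξ ℙ))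
    (Dg : (Ω → W) → (Lp W p ℙ →L[ℝ] 𝒴))
    (hdiff : ∀ ξ : Ω → W,
      HasFDerivAt (fun ζ : Lp W p ℙ => g (fun ω => ξ ω + ζ ω)) (Dg ξ) 0)
    (hcont : ∀ ξ : Ω → W, Continuous fun ζ : Lp W p ℙ => Dg (fun ω => ξ ω + ζ ω)) :
    ∀ (ξ ξ' : Ω → W) (η η' : Lp W p ℙ),
      AEMeasurable ξ ℙ → AEMeasurable ξ' ℙ → MemLp ξ q ℙ → MemLp ξ' q ℙ →
      Measure.map (fun ω => (ξ ω, η ω)) ℙ = Measure.map (fun ω => (ξ' ω, η' ω)) ℙ →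
      Dg ξ η = Dg ξ' η' :=
  stmt17_general ℙ p q f g hg Dg hdiff
end
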